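/- Let K be a field and n ≥ 1. Let Q be the Kronecker quiver with vertices 1, 2 and two arrows a, b : 1 → 2. Let N be the representation of Q over K with N_1 = K^n with ordered basis u_1 < ... < u_n, N_2 = K^{n+1} with ordered basis v_1 < ... < v_{n+1}, N_a(u_i) = v_i and N_b(u_i) = v_{i+1} for 1 ≤ i ≤ n (a preprojective indecomposable representation of the Kronecker quiver). Then for every dimension vector e = (e_1, e_2) and every subset β of the ordered basis B = {u_1, ..., u_n, v_1, ..., v_{n+1}} of type e, the Schubert cell C_β^N is either empty or in bijection with K^{d_β} for some integer d_β ≥ 0. -/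

import Mathlib

open scoped Classical

noncomputable section

namespace QGr

/-- A representation of the quiver with vertex set `V0` and arrow set `A`
(source and target maps are part of the data), given in coordinates with respect to
an ordered basis `B`: the basis element `b : B` sits at the vertex `vtx b`, the space
at the vertex `p` is `{b : B // vtx b = p} → K`, and `mmap a` is the map attached to
the arrow `a`. -/
structure Rep (K : Type) [Field K] (V0 A B : Type) where
  src : A → V0
  tgt : A → V0
  vtx : B → V0
  mmap : ∀ a : A, ({b : B // vtx b = src a} → K) → ({b : B // vtx b = tgt a} → K)

namespace Rep

variable {K : Type} [Field K] {V0 A B : Type}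

/-- A collection of subspaces, one at each vertex. -/
def SubRep (R : Rep K V0 A B) : Type :=
  ∀ p : V0, Submodule K ({b : B // R.vtx b = p} → K)

/-- The collection `W` is a subrepresentation. -/
def IsSubrep (R : Rep K V0 A B) (W : R.SubRep) : Prop :=
  ∀ a : A, ∀ x ∈ W (R.src a), R.mmap a x ∈ W (R.tgt a)

/-- All structure maps are `K`-linear. -/
def Linear (R : Rep K V0 A B) : Prop := ∀ a : A, IsLinearMap K (R.mmap a)

/-- Membership in the Schubert cell attached to `β ⊆ B`: each `W p` is spanned by vectors
`v b₀ = b₀ + ∑ λ_{b',b₀} b'` (`b₀ ∈ β ∩ B_p`), the sum over `b' < b₀` with `b' ∉ β`. -/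
def InCell [LinearOrder B] (R : Rep K V0 A B) (β : Finset B) (W : R.SubRep) : Prop :=
  ∀ p : V0, ∃ v : {b : B // b ∈ β ∧ R.vtx b = p} → ({b : B // R.vtx b = p} → K),
    (∀ b0, v b0 ⟨b0.val, b0.prop.2⟩ = 1) ∧
    (∀ b0 b1, b1.val ≠ b0.val → ¬(b1.val < b0.val ∧ b1.val ∉ β) → v b0 b1 = 0) ∧
    W p = Submodule.span K (Set.range v)

/-- The Schubert cell `C_β^M`. -/
def Cell [LinearOrder B] (R : Rep K V0 A B) (β : Finset B) : Set R.SubRep :=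
  {W | R.IsSubrep W ∧
    (∀ p : V0, Module.finrank K (W p) = (β.filter fun b => R.vtx b = p).card) ∧
    R.InCell β W}

/-- The quiver Grassmannian `Gr_e(M)`. -/
def Gr (R : Rep K V0 A B) (e : V0 → ℕ) : Set R.SubRep :=
  {W | R.IsSubrep W ∧ ∀ p : V0, Module.finrank K (W p) = e p}

/-- Collections of subspaces indexed by the vertices in `S0`. -/
def SubRepOn (R : Rep K V0 A B) (S0 : Set V0) : Type :=
  ∀ p : {p : V0 // p ∈ S0}, Submodule K ({b : B // R.vtx b = ↑p} → K)

/-- Subrepresentation condition over the subquiver `(S0, S1)`. -/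
def IsSubrepOn (R : Rep K V0 A B) (S0 : Set V0) (S1 : Set A) (W : R.SubRepOn S0) : Prop :=
  ∀ a : A, a ∈ S1 → ∀ (h1 : R.src a ∈ S0) (h2 : R.tgt a ∈ S0),
    ∀ x ∈ W ⟨R.src a, h1⟩, R.mmap a x ∈ W ⟨R.tgt a, h2⟩

/-- Cell membership over the vertices in `S0`. -/
def InCellOn [LinearOrder B] (R : Rep K V0 A B) (S0 : Set V0) (β : Finset B)
    (W : R.SubRepOn S0) : Prop :=
  ∀ p : {p : V0 // p ∈ S0},
    ∃ v : {b : B // b ∈ β ∧ R.vtx b = ↑p} → ({b : B // R.vtx b = ↑p} → K),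
      (∀ b0, v b0 ⟨b0.val, b0.prop.2⟩ = 1) ∧
      (∀ b0 b1, b1.val ≠ b0.val → ¬(b1.val < b0.val ∧ b1.val ∉ β) → v b0 b1 = 0) ∧
      W p = Submodule.span K (Set.range v)

/-- The Schubert cell of the restriction of the representation to the subquiver `(S0, S1)`. -/
def CellOn [LinearOrder B] (R : Rep K V0 A B) (S0 : Set V0) (S1 : Set A) (β : Finset B) :
    Set (R.SubRepOn S0) :=
  {W | R.IsSubrepOn S0 S1 W ∧
    (∀ p : {p : V0 // p ∈ S0},
      Module.finrank K (W p) = (β.filter fun b => R.vtx b = ↑p).card) ∧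
    R.InCellOn S0 β W}

/-- The quiver Grassmannian of the restriction to the subquiver `(S0, S1)`. -/
def GrOn (R : Rep K V0 A B) (S0 : Set V0) (S1 : Set A) (e : V0 → ℕ) :
    Set (R.SubRepOn S0) :=
  {W | R.IsSubrepOn S0 S1 W ∧ ∀ p : {p : V0 // p ∈ S0}, Module.finrank K (W p) = e ↑p}

/-- Restriction of a collection of subspaces to the vertices in `S0`. -/
def resOn (R : Rep K V0 A B) (S0 : Set V0) (W : R.SubRep) : R.SubRepOn S0 :=
  fun p => W ↑p

/-- `p < q` for vertices: every basis element at `p` precedes every basis element at `q`. -/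
def vlt [LT B] (R : Rep K V0 A B) (p q : V0) : Prop :=
  ∀ b b' : B, R.vtx b = p → R.vtx b' = q → b < b'

def vle [LT B] (R : Rep K V0 A B) (p q : V0) : Prop := p = q ∨ R.vlt p q

/-- The matrix of `mmap a` with respect to the ordered bases at source and target is a
(square) identity matrix. -/
def IsIdMat [LinearOrder B] (R : Rep K V0 A B) (a : A) : Prop :=
  ∃ e : {b : B // R.vtx b = R.src a} ≃o {b : B // R.vtx b = R.tgt a},
    ∀ i, R.mmap a (Pi.single i 1) = Pi.single (e i) 1

/-- `mmap a` sends the basis vector `b0` to the basis vector `b1`. -/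
def MapsBasisTo (R : Rep K V0 A B) (a : A) (b0 b1 : B) : Prop :=
  ∃ (h0 : R.vtx b0 = R.src a) (h1 : R.vtx b1 = R.tgt a),
    R.mmap a (Pi.single ⟨b0, h0⟩ 1) = Pi.single ⟨b1, h1⟩ 1

/-- The ordered basis `B` is ordered above the subquiver `(S0, S1)`. -/
def OrderedAbove [LinearOrder B] (R : Rep K V0 A B) (S0 : Set V0) (S1 : Set A) : Prop :=
  (∀ b b' : B, R.vtx b ∈ S0 → R.vtx b' ∉ S0 → b < b') ∧
  (∀ p q : V0, p ≠ q → R.vlt p q ∨ R.vlt q p) ∧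
  (∀ (r : ℕ) (pa : Fin (r+1) → V0), pa 0 ∈ S0 → (∀ i, i ≠ 0 → pa i ∉ S0) →
    Function.Injective pa →
    (∀ i : Fin r, ∃ a : A, (R.src a = pa i.castSucc ∧ R.tgt a = pa i.succ) ∨
      (R.src a = pa i.succ ∧ R.tgt a = pa i.castSucc)) →
    ∀ i : Fin r, R.vlt (pa i.castSucc) (pa i.succ)) ∧
  (∀ a : A, a ∉ S1 → R.IsIdMat a)

end Rep

/-- The relation on the vertices of the subquiver with vertex set `T0` identifying all
vertices of `S0` with each other. -/
def treeRel {V0 : Type} (S0 T0 : Set V0) :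
    {v : V0 // v ∈ T0} → {v : V0 // v ∈ T0} → Prop :=
  fun x y => (↑x ∈ S0 ∧ ↑y ∈ S0)

/-- The subquiver `(T0, T1)` is a tree extension of the subquiver `(S0, S1)`:
the quotient quiver `T/S` (arrows of `T` not in `S`; vertices of `T` with all vertices of `S`
identified) is a tree, i.e. it is connected (as an undirected graph) and the number of its
edges is one less than the number of its vertices. -/
def IsTreeExtensionIn {V0 A : Type} (src tgt : A → V0) (T0 : Set V0) (T1 : Set A)
    (S0 : Set V0) (S1 : Set A) : Prop :=
  (∀ u v : Quot (treeRel S0 T0), Relation.ReflTransGen (fun u v =>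
      ∃ a : A, a ∈ T1 ∧ a ∉ S1 ∧ ∃ (hs : src a ∈ T0) (ht : tgt a ∈ T0),
        (Quot.mk (treeRel S0 T0) ⟨src a, hs⟩ = u ∧ Quot.mk (treeRel S0 T0) ⟨tgt a, ht⟩ = v) ∨
        (Quot.mk (treeRel S0 T0) ⟨src a, hs⟩ = v ∧ Quot.mk (treeRel S0 T0) ⟨tgt a, ht⟩ = u))
      u v) ∧
  Nat.card {a : A // a ∈ T1 ∧ a ∉ S1} + 1 = Nat.card (Quot (treeRel S0 T0))

/-- `T` (the full ambient quiver) is a tree extension of the subquiver `(S0, S1)`. -/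
def IsTreeExtension {V0 A : Type} (src tgt : A → V0) (S0 : Set V0) (S1 : Set A) : Prop :=
  IsTreeExtensionIn src tgt Set.univ Set.univ S0 S1

namespace Rep

variable {K : Type} [Field K] {V0 A B QV QA : Type}

/-- The structure map of the push-forward representation `F_*M` attached to the arrow `aq`
of the target quiver. -/
def pushMap [Fintype A] (R : Rep K V0 A B) (qsrc qtgt : QA → QV) (Fv : V0 → QV)
    (Fa : A → QA) (hFs : ∀ a : A, Fv (R.src a) = qsrc (Fa a)) (aq : QA)
    (x : {b : B // Fv (R.vtx b) = qsrc aq} → K) (c : {b : B // Fv (R.vtx b) = qtgt aq}) : K :=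
  ∑ α : A, if hα : Fa α = aq then
    (if hc : R.vtx c.val = R.tgt α then
      R.mmap α (fun b => x ⟨b.val, by rw [b.prop, hFs α, hα]⟩) ⟨c.val, hc⟩
    else 0) else 0

/-- The push-forward representation `F_*M` along the quiver morphism `F = (Fv, Fa)`. -/
def push [Fintype A] (R : Rep K V0 A B) (qsrc qtgt : QA → QV) (Fv : V0 → QV)
    (Fa : A → QA) (hFs : ∀ a : A, Fv (R.src a) = qsrc (Fa a)) : Rep K QV QA B where
  src := qsrc
  tgt := qtgt
  vtx := fun b => Fv (R.vtx b)
  mmap := R.pushMap qsrc qtgt Fv Fa hFs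

/-- The push-forward `F_*V` of a collection of subspaces: at the vertex `q` of `Q` it consists
of all vectors whose component in each `M_p` with `Fv p = q` lies in `V_p`. -/
def pushSub (R : Rep K V0 A B) (Fv : V0 → QV) (W : R.SubRep) :
    ∀ q : QV, Submodule K ({b : B // Fv (R.vtx b) = q} → K) := fun q =>
  { carrier := {x | ∀ (p : V0) (hq : Fv p = q),
      (fun b : {b : B // R.vtx b = p} =>
        x ⟨b.val, by rw [b.prop]; exact hq⟩) ∈ W p}
    add_mem' := fun hx hy p hq => (W p).add_mem (hx p hq) (hy p hq)
    zero_mem' := fun p hq => (W p).zero_mem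
    smul_mem' := fun c x hx p hq => (W p).smul_mem c (hx p hq) }

/-- `reach n p` : there is an (undirected) walk of length `n` from `p` into `S0`. -/
def reach (R : Rep K V0 A B) (S0 : Set V0) : ℕ → V0 → Prop
  | 0, p => p ∈ S0
  | (n+1), p => ∃ a : A, (R.src a = p ∧ R.reach S0 n (R.tgt a)) ∨
      (R.tgt a = p ∧ R.reach S0 n (R.src a))

/-- The graph distance from `p` to the vertex set `S0`. -/
def distS (R : Rep K V0 A B) (S0 : Set V0) (p : V0) : ℕ :=
  sInf {n : ℕ | R.reach S0 n p}

/-- The fibre length `ε(p,p')` of a pair of vertices. -/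
def eps [LT B] (R : Rep K V0 A B) (Fv : V0 → QV) (p p' : V0) : ℕ :=
  Set.ncard {p'' : V0 | Fv p'' = Fv p ∧ R.vle p p'' ∧ R.vlt p'' p'}

/-- Lexicographic comparison `Ψ(p,p') < Ψ(q,q')`. -/
def psiLt [LT B] (R : Rep K V0 A B) (S0 : Set V0) (Fv : V0 → QV) (p p' q q' : V0) : Prop :=
  R.eps Fv p p' < R.eps Fv q q' ∨ (R.eps Fv p p' = R.eps Fv q q' ∧
    (max (R.distS S0 p) (R.distS S0 p') < max (R.distS S0 q) (R.distS S0 q') ∨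
     (max (R.distS S0 p) (R.distS S0 p') = max (R.distS S0 q) (R.distS S0 q') ∧
       R.vlt p' q')))

def type0 [LT B] (R : Rep K V0 A B) (Fa : A → QA) (aq : QA) (t s : V0) : Prop :=
  ¬ ∃ α : A, Fa α = aq ∧ R.vle (R.src α) s ∧ R.vle t (R.tgt α)

def type1 (R : Rep K V0 A B) (Fa : A → QA) (aq : QA) (t s : V0) : Prop :=
  ∃ α : A, Fa α = aq ∧ R.src α = s ∧ R.tgt α = t

def type2a [LT B] (R : Rep K V0 A B) (S0 : Set V0) (Fv : V0 → QV) (Fa : A → QA)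
    (aq : QA) (t s : V0) : Prop :=
  ∃ α' α'' : A, Fa α' = aq ∧ Fa α'' = aq ∧ R.tgt α' = t ∧ R.vlt (R.src α') s ∧
    R.src α'' = s ∧ R.vlt (R.tgt α'') t ∧ R.psiLt S0 Fv t (R.tgt α'') (R.src α') s

def type2b [LT B] (R : Rep K V0 A B) (S0 : Set V0) (Fv : V0 → QV) (Fa : A → QA)
    (aq : QA) (t s : V0) : Prop :=
  ∃ α' α'' : A, Fa α' = aq ∧ Fa α'' = aq ∧ R.tgt α' = t ∧ R.vlt (R.src α') s ∧
    R.src α'' = s ∧ R.vlt (R.tgt α'') t ∧ R.psiLt S0 Fv (R.src α') s t (R.tgt α'')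

def type3a [LT B] (R : Rep K V0 A B) (S0 : Set V0) (Fv : V0 → QV) (Fa : A → QA)
    (aq : QA) (t s : V0) : Prop :=
  ∃ α'' : A, Fa α'' = aq ∧ R.src α'' = s ∧ R.vlt t (R.tgt α'') ∧
    (¬ ∃ α : A, Fa α = aq ∧ R.tgt α = t) ∧
    ∀ α : A, Fa α = aq → R.vlt t (R.tgt α) → R.vlt (R.tgt α) (R.tgt α'') →
      R.psiLt S0 Fv (R.src α) s t (R.tgt α'')

def type4a [LT B] (R : Rep K V0 A B) (S0 : Set V0) (Fv : V0 → QV) (Fa : A → QA)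
    (aq : QA) (t s : V0) : Prop :=
  ∃ α' : A, Fa α' = aq ∧ R.tgt α' = t ∧ R.vlt (R.src α') s ∧
    (¬ ∃ α : A, Fa α = aq ∧ R.src α = s) ∧
    ∀ α : A, Fa α = aq → R.vlt (R.src α') (R.src α) → R.vlt (R.src α) s →
      R.psiLt S0 Fv t (R.tgt α) (R.src α') s

/-- `F` is strictly ordered with respect to the ordered basis. -/
def StrictlyOrdered [LT B] (R : Rep K V0 A B) (Fa : A → QA) : Prop :=
  ∀ α α' : A, α ≠ α' → Fa α = Fa α' →
    (R.vlt (R.src α) (R.src α') ∧ R.vlt (R.tgt α) (R.tgt α')) ∨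
    (R.vlt (R.src α') (R.src α) ∧ R.vlt (R.tgt α') (R.tgt α))

/-- The pair `(p, p')` is a relevant pair. -/
def relPair [LT B] (R : Rep K V0 A B) (S0 : Set V0) (Fv : V0 → QV) (p p' : V0) : Prop :=
  Fv p = Fv p' ∧ R.vle p p' ∧ p' ∉ S0

/-- Condition of Hypothesis (H) on outgoing arrows at the relevant pair `(p, p')`. -/
def outOK [LT B] (R : Rep K V0 A B) (S0 : Set V0) (Fv : V0 → QV) (Fa : A → QA)
    (qsrc qtgt : QA → QV) (p p' : V0) (aq : QA) : Prop :=
  qsrc aq = Fv p →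
    ((¬ ∃ α : A, Fa α = aq ∧ R.src α = p') →
      ∀ q : V0, Fv q = qtgt aq → R.type0 Fa aq q p') ∧
    ((∃ α : A, Fa α = aq ∧ R.src α = p') →
      ∃ α : A, Fa α = aq ∧ R.src α = p ∧
        (R.type1 Fa aq (R.tgt α) p' ∨ R.type2b S0 Fv Fa aq (R.tgt α) p'))

/-- Condition of Hypothesis (H) on incoming arrows at the relevant pair `(p, p')`. -/
def inOK [LT B] (R : Rep K V0 A B) (S0 : Set V0) (Fv : V0 → QV) (Fa : A → QA)
    (qsrc qtgt : QA → QV) (p p' : V0) (aq : QA) : Prop :=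
  qtgt aq = Fv p →
    ((¬ ∃ α : A, Fa α = aq ∧ R.tgt α = p) →
      ∀ q' : V0, Fv q' = qsrc aq → R.type0 Fa aq p q') ∧
    ((∃ α : A, Fa α = aq ∧ R.tgt α = p) →
      ∃ α : A, Fa α = aq ∧ R.tgt α = p' ∧
        (R.type1 Fa aq p (R.src α) ∨ R.type2a S0 Fv Fa aq p (R.src α)))

/-- Exceptional situation (1) of Hypothesis (H). -/
def exc1 [LinearOrder B] (R : Rep K V0 A B) (S0 : Set V0) (S1 : Set A) (Fv : V0 → QV)
    (Fa : A → QA) (qsrc : QA → QV) (p p' : V0) (aq : QA) : Prop :=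
  qsrc aq = Fv p ∧ ∃ α : A, Fa α = aq ∧ R.src α = p ∧
    (R.type2a S0 Fv Fa aq (R.tgt α) p' ∨ R.type4a S0 Fv Fa aq (R.tgt α) p') ∧
    (α ∈ S1 → R.IsIdMat α)

/-- Exceptional situation (2) of Hypothesis (H). -/
def exc2 [LT B] (R : Rep K V0 A B) (S0 : Set V0) (Fv : V0 → QV) (Fa : A → QA)
    (qtgt : QA → QV) (p p' : V0) (aq : QA) : Prop :=
  qtgt aq = Fv p ∧ ∃ α : A, Fa α = aq ∧ R.tgt α = p' ∧
    (R.type2b S0 Fv Fa aq p (R.src α) ∨ R.type3a S0 Fv Fa aq p (R.src α))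

/-- Hypothesis (H). -/
def HypH [LinearOrder B] (R : Rep K V0 A B) (S0 : Set V0) (S1 : Set A)
    (qsrc qtgt : QA → QV) (Fv : V0 → QV) (Fa : A → QA) : Prop :=
  R.StrictlyOrdered Fa ∧
  ∀ p p' : V0, R.relPair S0 Fv p p' →
    ((∀ aq : QA, R.outOK S0 Fv Fa qsrc qtgt p p' aq ∧ R.inOK S0 Fv Fa qsrc qtgt p p' aq) ∨
     (∃ aq0 : QA,
        (R.exc1 S0 S1 Fv Fa qsrc p p' aq0 ∨ R.exc2 S0 Fv Fa qtgt p p' aq0) ∧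
        ∀ aq : QA, aq ≠ aq0 →
          R.outOK S0 Fv Fa qsrc qtgt p p' aq ∧ R.inOK S0 Fv Fa qsrc qtgt p p' aq))


end Rep

end QGr

/-!
A point of the Schubert cell is determined by the free entries of its spanning vectors `w_b`, and
it is a subrepresentation iff both arrows map the `w_b`, `b ∈ β ∩ B₁`, into the span of the
`w_b`, `b ∈ β ∩ B₂`: a system of polynomial equations in the entries, one for each arrow, each
`u_t ∈ β` and each `v_j ∉ β`. If an arrow sends some `u_t ∈ β` to a basis vector outside `β`,
the leading coefficient of that image already violates the system, and the cell is empty.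
Otherwise each equation that is not automatic can be solved for a single entry: the one for `a`,
`u_t`, `v_j` for the entry of `w_{u_t}` at `u_j`, the one for `b`, `u_t`, `v_j` for the entry of
`w_{v_{t+1}}` at `v_j`. All other entries occurring in it are smaller when entries are ranked
first by their row along the string `v₀ — u₀ — v₁ — ⋯ — u_{n-1} — v_n` and then by the distance
of their column from the row. Such a triangular system has exactly one solution for each choice
of the remaining entries, so the cell is in bijection with `K^d`, `d` the number of entries not
solved for.
-/

section ReducedFamily

variable {K ι τ : Type*} [Fintype τ]

def IsReducedFamily [Zero K] [One K] (j : τ → ι) (v : τ → ι → K) : Prop :=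
  ∀ t s, v t (j s) = if s = t then 1 else 0

namespace IsReducedFamily

variable [Semiring K] {j : τ → ι} {v : τ → ι → K}

theorem sum_smul_apply_pivot (hv : IsReducedFamily j v) (c : τ → K) (s : τ) :
    (∑ t, c t • v t) (j s) = c s := by
  simp [Finset.sum_apply, hv _ s]

theorem mem_span_iff (hv : IsReducedFamily j v) (y : ι → K) :
    y ∈ Submodule.span K (Set.range v) ↔ y = ∑ t, y (j t) • v t := by
  refine ⟨fun hy => ?_, fun hy => hy ▸ Submodule.sum_mem _ fun t _ =>
    Submodule.smul_mem _ _ (Submodule.subset_span (Set.mem_range_self t))⟩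
  obtain ⟨c, rfl⟩ := (Submodule.mem_span_range_iff_exists_fun K).mp hy
  simp only [hv.sum_smul_apply_pivot]

theorem mem_span_iff_forall (hv : IsReducedFamily j v) (y : ι → K) :
    y ∈ Submodule.span K (Set.range v) ↔
      ∀ i ∉ Set.range j, y i = ∑ t, y (j t) * v t i := by
  rw [hv.mem_span_iff]
  refine ⟨fun hy i _ => by simpa using congrFun hy i, fun hy => funext fun i => ?_⟩
  by_cases hi : i ∈ Set.range j
  · obtain ⟨s, rfl⟩ := hi
    exact (hv.sum_smul_apply_pivot (fun t => y (j t)) s).symm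
  · simpa using hy i hi

theorem linearIndependent (hv : IsReducedFamily j v) : LinearIndependent K v :=
  Fintype.linearIndependent_iffₛ.mpr fun c c' h t => by
    rw [← hv.sum_smul_apply_pivot c t, h, hv.sum_smul_apply_pivot]

theorem finrank_span [Nontrivial K] [StrongRankCondition K] (hv : IsReducedFamily j v) :
    Module.finrank K (Submodule.span K (Set.range v)) = Fintype.card τ :=
  finrank_span_eq_card hv.linearIndependent

theorem eq_of_span_eq {v' : τ → ι → K} (hv : IsReducedFamily j v) (hv' : IsReducedFamily j v')
    (h : Submodule.span K (Set.range v) = Submodule.span K (Set.range v')) : v = v' := by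
  funext t
  have hmem : v t ∈ Submodule.span K (Set.range v') :=
    h ▸ Submodule.subset_span (Set.mem_range_self t)
  rw [(hv'.mem_span_iff _).mp hmem]
  simp [hv t]

end IsReducedFamily

end ReducedFamily

theorem IsLinearMap.eq_extend_of_map_single {K ι κ : Type*} [Semiring K] [Fintype ι]
    [DecidableEq ι] [DecidableEq κ] {f : (ι → K) → κ → K} (hf : IsLinearMap K f) {σ : ι → κ}
    (hσ : Function.Injective σ) (h : ∀ i, f (Pi.single i 1) = Pi.single (σ i) 1)
    (y : ι → K) : f y = Function.extend σ y 0 := by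
  have hy : f y = ∑ i, y i • Pi.single (σ i) 1 := by
    conv_lhs => rw [← Finset.univ_sum_single y]
    rw [show f (∑ i, Pi.single i (y i)) = ∑ i, f (Pi.single i (y i)) from
      map_sum (hf.mk' f) _ _]
    refine Finset.sum_congr rfl fun i _ => ?_
    rw [← h, ← hf.map_smul, ← Pi.single_smul, smul_eq_mul, mul_one]
  funext c
  rw [hy]
  by_cases hc : ∃ i, σ i = c
  · obtain ⟨i, rfl⟩ := hc
    simp [hσ.extend_apply, Pi.single_apply, hσ.eq_iff]
  · rw [Function.extend_apply' _ _ _ hc]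
    simp only [Finset.sum_apply, Pi.smul_apply, Pi.single_apply, smul_eq_mul]
    exact Finset.sum_eq_zero fun i _ => by rw [if_neg fun h => hc ⟨i, h.symm⟩, mul_zero]

section Triangular

variable {V E M : Type*} {r : V → V → Prop}

theorem existsUnique_fixedPt_of_wellFounded [Nonempty M] (hr : WellFounded r)
    {T : (V → M) → V → M} (hT : ∀ x y v, (∀ w, r w v → x w = y w) → T x v = T y v) :
    ∃! x, T x = x := by
  let x : V → M := hr.fix fun v IH =>
    T (fun w => if h : r w v then IH w h else Classical.arbitrary M) v
  have hx : T x = x := funext fun v => by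
    rw [show x v = _ from hr.fix_eq _ v]
    exact hT _ _ v fun w hw => by rw [dif_pos hw]
  refine ⟨x, hx, fun y hy => funext fun v => ?_⟩
  induction v using hr.induction with
  | _ v IH => rw [← hy, ← hx]; exact hT _ _ v IH

def triangularSolutionsEquiv [Nonempty M] (hr : WellFounded r) {p : E → V}
    (hp : Function.Injective p) {g : E → (V → M) → M}
    (hg : ∀ e x y, (∀ w, r w (p e) → x w = y w) → g e x = g e y) :
    {x : V → M // ∀ e, x (p e) = g e x} ≃ ({v // v ∉ Set.range p} → M) := by
  let op (y : {v // v ∉ Set.range p} → M) (x : V → M) (v : V) : M :=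
    if h : ∃ e, p e = v then g h.choose x else y ⟨v, h⟩
  have hop : ∀ y x, op y x = x ↔
      (∀ e, x (p e) = g e x) ∧ ∀ v (h : v ∉ Set.range p), x v = y ⟨v, h⟩ := by
    intro y x
    have hpe : ∀ e, op y x (p e) = g e x := fun e => by
      have h : ∃ e', p e' = p e := ⟨e, rfl⟩
      simp only [op, dif_pos h, hp h.choose_spec]
    refine ⟨fun hx => ⟨fun e => by rw [← hpe, hx], fun v h => by rw [← hx]; exact dif_neg h⟩,
      fun ⟨hx, hy⟩ => funext fun v => ?_⟩
    by_cases h : ∃ e, p e = v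
    · obtain ⟨e, rfl⟩ := h
      rw [hpe, hx]
    · rw [hy v h]; exact dif_neg h
  have hfix : ∀ y, ∃! x, op y x = x := fun y =>
    existsUnique_fixedPt_of_wellFounded hr fun x x' v hxx' => by
      by_cases h : ∃ e, p e = v
      · simp only [op, dif_pos h]
        exact hg _ x x' (by rw [h.choose_spec]; exact hxx')
      · simp only [op, dif_neg h]
  exact
    { toFun := fun x v => x.1 v
      invFun := fun y => ⟨(hfix y).choose, ((hop y _).mp (hfix y).choose_spec.1).1⟩
      left_inv := fun x => Subtype.ext <| (hfix fun v => x.1 v).unique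
        (hfix fun v => x.1 v).choose_spec.1 <| (hop (fun v => x.1 v) x.1).mpr ⟨x.2, fun v h => rfl⟩
      right_inv := fun y => funext fun v => ((hop y _).mp (hfix y).choose_spec.1).2 v v.2 }

end Triangular

namespace QGr

section EchelonCoordinates

variable {K : Type} [Field K] {V0 A B : Type} [LinearOrder B]

/-- `⟨(b, b'), _⟩` stands for the entry `λ_{b',b}`, which the definition of a Schubert cell
leaves free. -/
def CellCoord (vtx : B → V0) (β : Finset B) : Type :=
  {q : B × B // q.1 ∈ β ∧ q.2 ∉ β ∧ q.2 < q.1 ∧ vtx q.1 = vtx q.2}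

instance [Finite B] (vtx : B → V0) (β : Finset B) : Finite (CellCoord vtx β) :=
  Subtype.finite

variable {vtx : B → V0} {β : Finset B}

/-- `echelon x b` is the spanning vector `b + ∑ λ_{b',b} b'` with the entries `λ` given by `x`. -/
def echelon (x : CellCoord vtx β → K) (b b' : B) : K :=
  if b' = b then 1 else if h : b ∈ β ∧ b' ∉ β ∧ b' < b ∧ vtx b = vtx b' then x ⟨(b, b'), h⟩ else 0

theorem echelon_self (x : CellCoord vtx β → K) (b : B) : echelon x b b = 1 := if_pos rfl

theorem echelon_coord (x : CellCoord vtx β → K) (q : CellCoord vtx β) :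
    echelon x q.1.1 q.1.2 = x q := by
  rw [echelon, if_neg q.2.2.2.1.ne, dif_pos q.2]
  rfl

theorem echelon_eq_zero (x : CellCoord vtx β → K) {b b' : B} (hne : b' ≠ b)
    (h : ¬(b' < b ∧ b' ∉ β)) : echelon x b b' = 0 := by
  rw [echelon, if_neg hne, dif_neg fun h' => h ⟨h'.2.2.1, h'.2.1⟩]

theorem echelon_eq_zero_of_lt (x : CellCoord vtx β → K) {b b' : B} (h : b < b') :
    echelon x b b' = 0 :=
  echelon_eq_zero x h.ne' fun h' => h'.1.asymm h

theorem echelon_eq_zero_of_mem (x : CellCoord vtx β → K) {b b' : B} (hb' : b' ∈ β)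
    (hne : b' ≠ b) : echelon x b b' = 0 :=
  echelon_eq_zero x hne fun h => h.2 hb'

theorem echelon_congr {x y : CellCoord vtx β → K} {b b' : B}
    (h : ∀ q : CellCoord vtx β, q.1 = (b, b') → x q = y q) : echelon x b b' = echelon y b b' := by
  unfold echelon
  split_ifs with h₁ h₂
  exacts [rfl, h _ rfl, rfl]

def echelonRow (x : CellCoord vtx β → K) (p : V0) (b : B) : {b' : B // vtx b' = p} → K :=
  fun i => echelon x b i

theorem isReducedFamily_echelonRow (x : CellCoord vtx β → K) (p : V0) :
    IsReducedFamily (fun t : {b // b ∈ β ∧ vtx b = p} => (⟨t.1, t.2.2⟩ : {b // vtx b = p}))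
      (fun t => echelonRow x p t.1) := by
  intro t s
  split_ifs with h
  · subst h; exact echelon_self x _
  · exact echelon_eq_zero_of_mem x s.2.1 fun h' => h (Subtype.ext h')

def echelonSub (R : Rep K V0 A B) (x : CellCoord R.vtx β → K) : R.SubRep := fun p =>
  Submodule.span K (Set.range fun t : {b // b ∈ β ∧ R.vtx b = p} => echelonRow x p t.1)

namespace Rep

variable (R : Rep K V0 A B)

theorem inCell_echelonSub (x : CellCoord R.vtx β → K) : R.InCell β (echelonSub R x) :=
  fun p => ⟨fun t => echelonRow x p t.1, fun _ => echelon_self x _,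
    fun _ _ hne hlt => echelon_eq_zero x hne hlt, rfl⟩

theorem exists_echelonSub_eq {W : R.SubRep} (hW : R.InCell β W) :
    ∃ x : CellCoord R.vtx β → K, echelonSub R x = W := by
  choose v hv₁ hv₀ hvW using hW
  refine ⟨fun q => v _ ⟨q.1.1, q.2.1, rfl⟩ ⟨q.1.2, q.2.2.2.2.symm⟩, funext fun p => ?_⟩
  rw [hvW, echelonSub]
  congr 2
  funext ⟨t, ht, htp⟩ i
  subst htp
  by_cases hi : i.1 = t
  · obtain rfl : i = ⟨t, rfl⟩ := Subtype.ext hi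
    exact (echelon_self _ _).trans (hv₁ _ ⟨t, ht, rfl⟩).symm
  by_cases hlt : i.1 < t ∧ i.1 ∉ β
  · simp only [echelonRow, echelon, if_neg hi]
    rw [dif_pos ⟨ht, hlt.2, hlt.1, i.2.symm⟩]
  · rw [hv₀ _ _ _ hi hlt]
    exact echelon_eq_zero _ hi hlt

variable [Fintype B]

theorem finrank_echelonSub (x : CellCoord R.vtx β → K) (p : V0) :
    Module.finrank K (echelonSub R x p) = (β.filter fun b => R.vtx b = p).card := by
  rw [echelonSub, (isReducedFamily_echelonRow x p).finrank_span, Fintype.card_subtype]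
  congr 1
  ext
  simp

theorem echelonSub_mem_cell_iff (x : CellCoord R.vtx β → K) :
    echelonSub R x ∈ R.Cell β ↔ R.IsSubrep (echelonSub R x) :=
  ⟨fun h => h.1, fun h => ⟨h, R.finrank_echelonSub x, R.inCell_echelonSub x⟩⟩

theorem echelonSub_injective : Function.Injective (echelonSub R (β := β)) := by
  intro x y hxy
  funext q
  have hrow := (isReducedFamily_echelonRow x (R.vtx q.1.1)).eq_of_span_eq
    (isReducedFamily_echelonRow y _) (congrFun hxy _)
  have := congrFun (congrFun hrow ⟨q.1.1, q.2.1, rfl⟩) ⟨q.1.2, q.2.2.2.2.symm⟩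
  simpa only [echelonRow, echelon_coord] using this

def cellEquiv : R.Cell β ≃ {x : CellCoord R.vtx β → K // R.IsSubrep (echelonSub R x)} :=
  (Equiv.ofBijective (fun x => ⟨echelonSub R x.1, (R.echelonSub_mem_cell_iff x.1).mpr x.2⟩)
    ⟨fun _ _ h => Subtype.ext (R.echelonSub_injective (congrArg Subtype.val h)), fun W => by
      obtain ⟨x, hx⟩ := R.exists_echelonSub_eq W.2.2.2
      exact ⟨⟨x, hx ▸ W.2.1⟩, Subtype.ext hx⟩⟩).symm

theorem isSubrep_echelonSub_iff [DecidableEq V0] (hR : R.Linear) (x : CellCoord R.vtx β → K) :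
    R.IsSubrep (echelonSub R x) ↔
      ∀ a (t : {b // b ∈ β ∧ R.vtx b = R.src a}) (c : {b // R.vtx b = R.tgt a}), c.1 ∉ β →
        R.mmap a (echelonRow x _ t.1) c =
          ∑ s : {b // b ∈ β ∧ R.vtx b = R.tgt a},
            R.mmap a (echelonRow x _ t.1) ⟨s.1, s.2.2⟩ * echelonRow x _ s.1 c := by
  refine forall_congr' fun a => ?_
  have hspan := Submodule.span_le (p := (echelonSub R x (R.tgt a)).comap ((hR a).mk' _))
    (s := Set.range fun t : {b // b ∈ β ∧ R.vtx b = R.src a} => echelonRow x _ t.1)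
  refine hspan.trans (Set.range_subset_iff.trans (forall_congr' fun t => ?_))
  change R.mmap a _ ∈ echelonSub R x _ ↔ _
  rw [echelonSub, (isReducedFamily_echelonRow x _).mem_span_iff_forall]
  refine forall_congr' fun c => imp_congr_left (not_congr ?_)
  exact ⟨by rintro ⟨s, rfl⟩; exact s.2.1, fun h => ⟨⟨c.1, h, c.2⟩, rfl⟩⟩

end Rep

end EchelonCoordinates

end QGr

namespace Kronecker

open QGr

variable {K : Type} [Field K] (n : ℕ)

abbrev vtx (b : Fin (2 * n + 1)) : Bool := decide (n ≤ (b : ℕ))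

abbrev BasisAt (p : Bool) : Type := {b : Fin (2 * n + 1) // vtx n b = p}

variable {n}

theorem BasisAt.val_lt (i : BasisAt n false) : (i.1 : ℕ) < n := by simpa using i.2

theorem BasisAt.le_val (c : BasisAt n true) : n ≤ (c.1 : ℕ) := by simpa using c.2

variable (n)

def rep (mm : Bool → (BasisAt n false → K) → BasisAt n true → K) :
    Rep K Bool Bool (Fin (2 * n + 1)) where
  src _ := false
  tgt _ := true
  vtx := vtx n
  mmap := mm

/-- The arrow `a = false` sends `u_i` to `v_i` and `b = true` sends it to `v_{i+1}`, where
`u_i = i` and `v_i = n + i`. -/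
def shift (a : Bool) (i : BasisAt n false) : BasisAt n true :=
  ⟨⟨n + i + a.toNat, by have := i.val_lt; have := a.toNat_le; omega⟩,
    by simp only [vtx, decide_eq_true_iff]; omega⟩

variable {n}

theorem val_shift (a : Bool) (i : BasisAt n false) : ((shift n a i).1 : ℕ) = n + i + a.toNat :=
  rfl

@[simp]
theorem val_shift_false (i : BasisAt n false) : ((shift n false i).1 : ℕ) = n + i := rfl

@[simp]
theorem val_shift_true (i : BasisAt n false) : ((shift n true i).1 : ℕ) = n + i + 1 := rfl

theorem shift_lt_shift_iff {a : Bool} {i j : BasisAt n false} :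
    (shift n a i).1 < (shift n a j).1 ↔ i.1 < j.1 := by
  rw [Fin.lt_def, Fin.lt_def, val_shift, val_shift]
  omega

theorem shift_injective (a : Bool) : Function.Injective (shift n a) := fun i j h => by
  have := congrArg (fun c : BasisAt n true => (c.1 : ℕ)) h
  simp only [val_shift] at this
  exact Subtype.ext (Fin.ext (by omega))

def unshift (c : BasisAt n true) (h : (c.1 : ℕ) < 2 * n) : BasisAt n false :=
  ⟨⟨c - n, by omega⟩, by simp only [vtx, decide_eq_false_iff_not, not_le]; omega⟩

theorem shift_unshift (c : BasisAt n true) (h : (c.1 : ℕ) < 2 * n) :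
    shift n false (unshift c h) = c :=
  Subtype.ext (Fin.ext (by simp only [val_shift_false, unshift]; have := c.le_val; omega))

variable {β : Finset (Fin (2 * n + 1))}

/-- The coefficient at `c` of the image of `echelon x t` under the arrow `a`. -/
def arrowCoef (x : CellCoord (vtx n) β → K) (a : Bool) (t : Fin (2 * n + 1))
    (c : BasisAt n true) : K :=
  Function.extend (shift n a) (echelonRow x false t) 0 c

theorem arrowCoef_shift (x : CellCoord (vtx n) β → K) (a : Bool) (t : Fin (2 * n + 1))
    (j : BasisAt n false) : arrowCoef x a t (shift n a j) = echelon x t j :=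
  (shift_injective a).extend_apply _ _ _

theorem arrowCoef_eq_zero (x : CellCoord (vtx n) β → K) {a : Bool} {t : BasisAt n false}
    {c : BasisAt n true} (h : (shift n a t).1 < c.1) : arrowCoef x a t c = 0 := by
  by_cases hc : ∃ j, shift n a j = c
  · obtain ⟨j, rfl⟩ := hc
    exact (arrowCoef_shift x a t j).trans (echelon_eq_zero_of_lt x (shift_lt_shift_iff.mp h))
  · exact Function.extend_apply' _ _ _ hc

theorem arrowCoef_congr {x y : CellCoord (vtx n) β → K} {a : Bool} {t : Fin (2 * n + 1)}
    {c : BasisAt n true} (h : ∀ j, shift n a j = c → echelon x t j = echelon y t j) :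
    arrowCoef x a t c = arrowCoef y a t c := by
  by_cases hc : ∃ j, shift n a j = c
  · obtain ⟨j, rfl⟩ := hc
    rw [arrowCoef_shift, arrowCoef_shift, h j rfl]
  · rw [arrowCoef, arrowCoef, Function.extend_apply' _ _ _ hc, Function.extend_apply' _ _ _ hc]

theorem arrowCoef_mul_echelon_eq_zero (x : CellCoord (vtx n) β → K) {a : Bool}
    {t : BasisAt n false} {c s : BasisAt n true} (hs : s.1 ∈ β) (hc : c.1 ∉ β)
    (h : ¬(c.1 < s.1 ∧ s.1 ≤ (shift n a t).1)) : arrowCoef x a t s * echelon x s c = 0 := by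
  rcases not_and_or.mp h with h | h
  · have hsc : s.1 < c.1 := lt_of_le_of_ne (not_lt.mp h) fun h' => hc (h' ▸ hs)
    rw [echelon_eq_zero_of_lt x hsc, mul_zero]
  · rw [arrowCoef_eq_zero x (not_le.mp h), zero_mul]

def RowEquation (x : CellCoord (vtx n) β → K) (a : Bool) (t : BasisAt n false)
    (c : BasisAt n true) : Prop :=
  arrowCoef x a t c =
    ∑ s : {b // b ∈ β ∧ vtx n b = true}, arrowCoef x a t ⟨s.1, s.2.2⟩ * echelon x s c

theorem isSubrep_iff_rowEquation {mm : Bool → (BasisAt n false → K) → BasisAt n true → K}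
    (hlin : ∀ a, IsLinearMap K (mm a))
    (hmm : ∀ a i, mm a (Pi.single i 1) = Pi.single (shift n a i) 1)
    (x : CellCoord (vtx n) β → K) :
    (rep n mm).IsSubrep (echelonSub (rep n mm) x) ↔
      ∀ a (t : BasisAt n false) (c : BasisAt n true), t.1 ∈ β → c.1 ∉ β →
        RowEquation x a t c := by
  have hcoef : ∀ a t, mm a (echelonRow x false t) = arrowCoef x a t := fun a t =>
    funext fun c => congrFun ((hlin a).eq_extend_of_map_single (shift_injective a) (hmm a) _) c
  refine (Rep.isSubrep_echelonSub_iff (rep n mm) hlin x).trans <| forall_congr' fun a =>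
    ⟨fun h t c ht hc => ?_, fun h t c hc => ?_⟩
  · have := h ⟨t.1, ht, t.2⟩ c hc
    simp only [rep, hcoef, echelonRow] at this
    exact this
  · have : RowEquation x a ⟨t.1, t.2.2⟩ c := h ⟨t.1, t.2.2⟩ c t.2.1 hc
    simp only [rep, hcoef, echelonRow]
    exact this

theorem not_rowEquation_shift (x : CellCoord (vtx n) β → K) {a : Bool} {t : BasisAt n false}
    (h : (shift n a t).1 ∉ β) : ¬RowEquation x a t (shift n a t) := by
  rw [RowEquation, arrowCoef_shift, echelon_self,
    Finset.sum_eq_zero fun s _ => arrowCoef_mul_echelon_eq_zero x s.2.1 h fun h' => ?_]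
  · exact one_ne_zero
  · exact h'.1.not_ge h'.2

theorem rowEquation_of_lt (x : CellCoord (vtx n) β → K) {a : Bool} {t : BasisAt n false}
    {c : BasisAt n true} (hc : c.1 ∉ β) (h : (shift n a t).1 < c.1) : RowEquation x a t c := by
  rw [RowEquation, arrowCoef_eq_zero x h,
    Finset.sum_eq_zero fun s _ => arrowCoef_mul_echelon_eq_zero x s.2.1 hc fun h' => ?_]
  exact (h'.1.trans_le h'.2).not_gt h

variable (n β) in
def ShiftClosed : Prop := ∀ a (t : BasisAt n false), t.1 ∈ β → (shift n a t).1 ∈ β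

variable (n β) in
/-- The equations with `c < shift a t`; the others hold trivially (`rowEquation_of_lt`) or
contradict `ShiftClosed`. -/
@[ext]
structure ActiveEquation where
  arrow : Bool
  row : BasisAt n false
  col : BasisAt n true
  row_mem : row.1 ∈ β
  col_not_mem : col.1 ∉ β
  col_lt : col.1 < (shift n arrow row).1

theorem val_lt_of_lt_shift_false {t : BasisAt n false} {c : BasisAt n true}
    (h : c.1 < (shift n false t).1) : (c.1 : ℕ) < 2 * n := by
  have := t.val_lt
  rw [Fin.lt_def, val_shift_false] at h
  omega

theorem unshift_lt {t : BasisAt n false} {c : BasisAt n true} (h : c.1 < (shift n false t).1) :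
    (unshift c (val_lt_of_lt_shift_false h)).1 < t.1 := by
  have := c.le_val
  have h' : (c.1 : ℕ) < n + t.1 := h
  show (c.1 : ℕ) - n < t.1
  omega

def pivot (hβ : ShiftClosed n β) (e : ActiveEquation n β) : CellCoord (vtx n) β :=
  match e with
  | ⟨false, t, c, ht, hc, hlt⟩ =>
    have h2n := val_lt_of_lt_shift_false hlt
    ⟨(t.1, (unshift c h2n).1), ht, fun h => hc (shift_unshift c h2n ▸ hβ false _ h),
      unshift_lt hlt, t.2.trans (unshift c h2n).2.symm⟩
  | ⟨true, t, c, ht, hc, hlt⟩ =>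
    ⟨((shift n true t).1, c.1), hβ true t ht, hc, hlt, (shift n true t).2.trans c.2.symm⟩

def pivotValue (hβ : ShiftClosed n β) (e : ActiveEquation n β) (x : CellCoord (vtx n) β → K) :
    K :=
  match e with
  | ⟨false, t, c, _, _, _⟩ =>
    ∑ s : {b // b ∈ β ∧ vtx n b = true}, arrowCoef x false t ⟨s.1, s.2.2⟩ * echelon x s c
  | ⟨true, t, c, ht, _, _⟩ =>
    arrowCoef x true t c -
      ∑ s ∈ Finset.univ.erase
          (⟨(shift n true t).1, hβ true t ht, (shift n true t).2⟩ : {b // b ∈ β ∧ vtx n b = true}),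
        arrowCoef x true t ⟨s.1, s.2.2⟩ * echelon x s c

theorem rowEquation_iff (hβ : ShiftClosed n β) (x : CellCoord (vtx n) β → K)
    (e : ActiveEquation n β) :
    RowEquation x e.arrow e.row e.col ↔ x (pivot hβ e) = pivotValue hβ e x := by
  rcases e with ⟨_ | _, t, c, ht, hc, hlt⟩
  · have hL : arrowCoef x false t c = x (pivot hβ ⟨false, t, c, ht, hc, hlt⟩) := by
      rw [← echelon_coord x (pivot hβ _)]
      conv_lhs => rw [← shift_unshift c (val_lt_of_lt_shift_false hlt)]
      exact arrowCoef_shift x false t _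
    change arrowCoef x false t c = _ ↔ _
    rw [hL]
    exact Iff.rfl
  · let s₀ : {b // b ∈ β ∧ vtx n b = true} := ⟨(shift n true t).1, hβ true t ht, (shift n true t).2⟩
    have h₀ : arrowCoef x true t ⟨s₀.1, s₀.2.2⟩ * echelon x s₀ c =
        x (pivot hβ ⟨true, t, c, ht, hc, hlt⟩) := by
      rw [show (⟨s₀.1, s₀.2.2⟩ : BasisAt n true) = shift n true t from rfl, arrowCoef_shift,
        echelon_self, one_mul]
      exact echelon_coord x (pivot hβ ⟨true, t, c, ht, hc, hlt⟩)
    rw [RowEquation, ← Finset.add_sum_erase _ _ (Finset.mem_univ s₀), h₀]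
    change _ ↔ _ = arrowCoef x true t c - _
    rw [eq_sub_iff_add_eq, eq_comm]

theorem pivot_injective (hβ : ShiftClosed n β) : Function.Injective (pivot hβ) := by
  intro e e' h
  have hrow := congrArg (fun q : CellCoord (vtx n) β => (q.1.1 : ℕ)) h
  have hcol := congrArg (fun q : CellCoord (vtx n) β => (q.1.2 : ℕ)) h
  rcases e with ⟨_ | _, t, c, ht, hc, hlt⟩ <;> rcases e' with ⟨_ | _, t', c', ht', hc', hlt'⟩ <;>
    dsimp only [pivot, unshift, val_shift_true] at hrow hcol <;>
    have := t.val_lt <;> have := t'.val_lt <;> have := c.le_val <;> have := c'.le_val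
  · exact ActiveEquation.ext rfl (Subtype.ext (Fin.ext hrow))
      (Subtype.ext (Fin.ext (show (c.1 : ℕ) = c'.1 by omega)))
  · omega
  · omega
  · exact ActiveEquation.ext rfl (Subtype.ext (Fin.ext (show (t.1 : ℕ) = t'.1 by omega)))
      (Subtype.ext (Fin.ext hcol))

variable (n) in
/-- Rows are ranked along the string `v₀ — u₀ — v₁ — u₁ — ⋯ — u_{n-1} — v_n`. -/
def rowRank (b : Fin (2 * n + 1)) : ℕ := if (b : ℕ) < n then 2 * b + 1 else 2 * (b - n)

variable (n) in
def pairRank (b b' : Fin (2 * n + 1)) : ℕ ×ₗ ℕ := toLex (rowRank n b, (b : ℕ) - b')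

theorem rowRank_basisAt_false (t : BasisAt n false) : rowRank n t.1 = 2 * t.1 + 1 :=
  if_pos t.val_lt

theorem rowRank_basisAt_true (c : BasisAt n true) : rowRank n c.1 = 2 * (c.1 - n) :=
  if_neg c.le_val.not_gt

theorem rowRank_lt_of_le_shift_false {t : BasisAt n false} {s : BasisAt n true}
    (h : s.1 ≤ (shift n false t).1) : rowRank n s.1 < rowRank n t.1 := by
  rw [Fin.le_def, val_shift_false] at h
  rw [rowRank_basisAt_true, rowRank_basisAt_false]
  omega

theorem rowRank_lt_shift_true (t : BasisAt n false) :
    rowRank n t.1 < rowRank n (shift n true t).1 := by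
  rw [rowRank_basisAt_false, rowRank_basisAt_true, val_shift_true]
  omega

theorem rowRank_lt_rowRank {s s' : BasisAt n true} (h : s.1 < s'.1) :
    rowRank n s.1 < rowRank n s'.1 := by
  rw [Fin.lt_def] at h
  rw [rowRank_basisAt_true, rowRank_basisAt_true]
  have := s.le_val
  omega

theorem pairRank_lt_of_rowRank_lt {b b' c c' : Fin (2 * n + 1)} (h : rowRank n b < rowRank n b') :
    pairRank n b c < pairRank n b' c' :=
  Prod.Lex.toLex_lt_toLex.mpr (Or.inl h)

theorem pairRank_lt_of_sub_lt {b c c' : Fin (2 * n + 1)} (h : (b : ℕ) - c < b - c') :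
    pairRank n b c < pairRank n b c' :=
  Prod.Lex.toLex_lt_toLex.mpr (Or.inr ⟨rfl, h⟩)

theorem echelon_congr_of_pairRank_lt {x y : CellCoord (vtx n) β → K} {N : ℕ ×ₗ ℕ}
    (hxy : ∀ w : CellCoord (vtx n) β, pairRank n w.1.1 w.1.2 < N → x w = y w)
    {b b' : Fin (2 * n + 1)} (h : pairRank n b b' < N) : echelon x b b' = echelon y b b' :=
  echelon_congr fun q hq => hxy q (by simpa only [hq] using h)

theorem pivotValue_congr (hβ : ShiftClosed n β) (e : ActiveEquation n β)
    {x y : CellCoord (vtx n) β → K}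
    (hxy : ∀ w, pairRank n w.1.1 w.1.2 < pairRank n (pivot hβ e).1.1 (pivot hβ e).1.2 →
      x w = y w) :
    pivotValue hβ e x = pivotValue hβ e y := by
  rcases e with ⟨_ | _, t, c, ht, hc, hlt⟩
  · refine Finset.sum_congr rfl fun s _ => ?_
    by_cases hs : c.1 < s.1 ∧ s.1 ≤ (shift n false t).1
    · refine congrArg₂ (· * ·) (arrowCoef_congr fun j hj => echelon_congr_of_pairRank_lt hxy
        (pairRank_lt_of_sub_lt ?_)) (echelon_congr_of_pairRank_lt hxy
        (pairRank_lt_of_rowRank_lt (rowRank_lt_of_le_shift_false (s := ⟨s.1, s.2.2⟩) hs.2)))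
      have hjs : n + j = s.1 := congrArg (fun c : BasisAt n true => (c.1 : ℕ)) hj
      have := c.le_val
      rw [Fin.lt_def, Fin.le_def, val_shift_false] at hs
      show (t.1 : ℕ) - j < t - (c - n)
      omega
    · rw [arrowCoef_mul_echelon_eq_zero x s.2.1 hc hs, arrowCoef_mul_echelon_eq_zero y s.2.1 hc hs]
  · have hrow : ∀ c', arrowCoef x true t c' = arrowCoef y true t c' := fun c' =>
      arrowCoef_congr fun j _ => echelon_congr_of_pairRank_lt hxy
        (pairRank_lt_of_rowRank_lt (rowRank_lt_shift_true t))
    refine congrArg₂ (· - ·) (hrow c) (Finset.sum_congr rfl fun s hs => ?_)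
    by_cases hcs : c.1 < s.1 ∧ s.1 ≤ (shift n true t).1
    · have hsb : s.1 < (shift n true t).1 :=
        lt_of_le_of_ne hcs.2 fun h => (Finset.mem_erase.mp hs).1 (Subtype.ext h)
      exact congrArg₂ (· * ·) (hrow _) (echelon_congr_of_pairRank_lt hxy
        (pairRank_lt_of_rowRank_lt (rowRank_lt_rowRank (s := ⟨s.1, s.2.2⟩) hsb)))
    · rw [arrowCoef_mul_echelon_eq_zero x s.2.1 hc hcs,
        arrowCoef_mul_echelon_eq_zero y s.2.1 hc hcs]

section Cell

variable {mm : Bool → (BasisAt n false → K) → BasisAt n true → K}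
  (hlin : ∀ a, IsLinearMap K (mm a))
  (hmm : ∀ a i, mm a (Pi.single i 1) = Pi.single (shift n a i) 1)
include hlin hmm

theorem isSubrep_iff_pivot (hβ : ShiftClosed n β) (x : CellCoord (vtx n) β → K) :
    (rep n mm).IsSubrep (echelonSub (rep n mm) x) ↔ ∀ e, x (pivot hβ e) = pivotValue hβ e x := by
  refine (isSubrep_iff_rowEquation hlin hmm x).trans ⟨fun h e =>
    (rowEquation_iff hβ x e).mp (h _ _ _ e.row_mem e.col_not_mem), fun h a t c ht hc => ?_⟩
  rcases lt_trichotomy c.1 (shift n a t).1 with hlt | heq | hgt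
  · exact (rowEquation_iff hβ x ⟨a, t, c, ht, hc, hlt⟩).mpr (h _)
  · exact absurd (heq ▸ hβ a t ht) hc
  · exact rowEquation_of_lt x hc hgt

theorem not_isSubrep_of_not_shiftClosed (hβ : ¬ShiftClosed n β) (x : CellCoord (vtx n) β → K) :
    ¬(rep n mm).IsSubrep (echelonSub (rep n mm) x) := by
  rw [isSubrep_iff_rowEquation hlin hmm x]
  intro h
  unfold ShiftClosed at hβ
  push Not at hβ
  obtain ⟨a, t, ht, hs⟩ := hβ
  exact not_rowEquation_shift x hs (h a t _ ht hs)

variable (β) in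
theorem cell_eq_empty_or_equiv_pi :
    (rep n mm).Cell β = ∅ ∨ ∃ d : ℕ, Nonempty ((rep n mm).Cell β ≃ (Fin d → K)) := by
  by_cases hβ : ShiftClosed n β
  · exact Or.inr ⟨_, ⟨(rep n mm).cellEquiv.trans <|
      (Equiv.subtypeEquivRight (isSubrep_iff_pivot hlin hmm hβ)).trans <|
      (triangularSolutionsEquiv
        (InvImage.wf (fun w : CellCoord (vtx n) β => pairRank n w.1.1 w.1.2) wellFounded_lt)
        (pivot_injective hβ) (g := pivotValue hβ) fun e _ _ => pivotValue_congr hβ e).trans <|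
      Equiv.arrowCongr (Finite.equivFin _) (Equiv.refl K)⟩⟩
  · exact Or.inl (Set.eq_empty_of_forall_notMem fun W hW =>
      not_isSubrep_of_not_shiftClosed hlin hmm hβ _ ((rep n mm).cellEquiv ⟨W, hW⟩).2)

end Cell

end Kronecker

open QGr in
/-- Let `N` be the preprojective indecomposable representation of the
Kronecker quiver (two vertices `false < true`, two arrows `a = false`, `b = true` from
`false` to `true`) with `N₁ = K^n` (basis `u₁ < ⋯ < u_n`, the first `n` basis elements),
`N₂ = K^{n+1}` (basis `v₁ < ⋯ < v_{n+1}`, the last `n+1` basis elements), and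
`N_a(uᵢ) = vᵢ`, `N_b(uᵢ) = vᵢ₊₁`.  Then for every dimension vector `e` and every subset
`β` of the ordered basis of type `e`, the Schubert cell `C_β^N` is either empty or in
bijection with some affine space `K^d`. -/
theorem kronecker_preprojective_schubert_cells
    {K : Type} [Field K] (n : ℕ)
    (R : Rep K Bool Bool (Fin (2 * n + 1)))
    (hsrc : R.src = fun _ => false) (htgt : R.tgt = fun _ => true)
    (hvtx : R.vtx = fun b : Fin (2 * n + 1) => decide (n ≤ (b : ℕ)))
    (hlin : R.Linear)
    (hNa : ∀ (i : ℕ) (hi : i < n),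
      R.MapsBasisTo false ⟨i, by omega⟩ ⟨n + i, by omega⟩)
    (hNb : ∀ (i : ℕ) (hi : i < n),
      R.MapsBasisTo true ⟨i, by omega⟩ ⟨n + i + 1, by omega⟩) :
    ∀ (e : Bool → ℕ) (β : Finset (Fin (2 * n + 1))),
      (∀ q : Bool, (β.filter fun b => R.vtx b = q).card = e q) →
      (R.Cell β = ∅ ∨ ∃ d : ℕ, Nonempty (↥(R.Cell β) ≃ (Fin d → K))) := by
  obtain ⟨src, tgt, vtx, mm⟩ := R
  obtain rfl : src = _ := hsrc
  obtain rfl : tgt = _ := htgt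
  obtain rfl : vtx = _ := hvtx
  intro _ β _
  refine Kronecker.cell_eq_empty_or_equiv_pi β hlin fun a i => ?_
  cases a
  · obtain ⟨_, _, h⟩ := hNa i.1 i.val_lt
    convert h
    simp
  · obtain ⟨_, _, h⟩ := hNb i.1 i.val_lt
    convert h
    simp
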